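/- For positive integers m ≤ n, ∑_{k=1}^{m} (n−k)!/(m−k)! · [ψ₀(n−k+1)² + ψ₁(n−k+1)] = n!/((m−1)!(n−m+1)³) · [(n−m+1)²ψ₁(n+1) − 2(n−m+1)ψ₀(n+1) + (n−m+1)²ψ₀(n+1)² + 2]. -/

import Mathlib

/-!
Differentiating `log Γ(x + 1) = log x + log Γ(x)` gives `ψ₀(x + 1) = ψ₀(x) + 1/x` and
`ψ₁(x + 1) = ψ₁(x) - 1/x²`. Substituting `j = m - k` and `a = n - m`, the sum becomes
`∑_{j ≤ b} (a + j)!/j! · (ψ₀² + ψ₁)(a + j + 1)` with `b = m - 1`, whose closed form follows by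
induction on `b`: each step is the two recurrences at `a + b + 2` plus a rational identity.
-/

open Finset

/-- The `m`-th polygamma function: the `(m+1)`-th derivative of `log ∘ Γ`. -/
noncomputable def psi (m : ℕ) (x : ℝ) : ℝ :=
  iteratedDeriv (m + 1) (fun y => Real.log (Real.Gamma y)) x

open Real
open scoped Nat

lemma analyticAt_Gamma_of_pos {x : ℝ} (hx : 0 < x) : AnalyticAt ℝ Gamma x := by
  have hopen : IsOpen {s : ℂ | 0 < s.re} := isOpen_lt continuous_const Complex.continuous_re
  have hC : AnalyticAt ℂ Complex.Gamma x :=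
    DifferentiableOn.analyticAt
      (fun s hs => (Complex.differentiableAt_Gamma s fun m hm => by
        simp [hm] at hs; linarith [(Nat.cast_nonneg m : (0 : ℝ) ≤ m)]).differentiableWithinAt)
      (hopen.mem_nhds (by simpa using hx))
  simpa [Complex.Gamma_ofReal] using hC.re_ofReal

lemma analyticAt_log_Gamma {x : ℝ} (hx : 0 < x) : AnalyticAt ℝ (fun y => log (Gamma y)) x :=
  (analyticAt_Gamma_of_pos hx).log (Gamma_pos_of_pos hx)

lemma psi_add_one (m : ℕ) {x : ℝ} (hx : 0 < x) :
    psi m (x + 1) = psi m x + iteratedDeriv (m + 1) log x := by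
  have hshift : (fun y => log (Gamma (y + 1))) =ᶠ[nhds x] fun y => log y + log (Gamma y) := by
    filter_upwards [lt_mem_nhds hx] with y hy
    rw [Gamma_add_one hy.ne', log_mul hy.ne' (Gamma_pos_of_pos hy).ne']
  calc psi m (x + 1) = iteratedDeriv (m + 1) (fun y => log (Gamma (y + 1))) x := by
        rw [iteratedDeriv_comp_add_const (m + 1) (fun y => log (Gamma y)) 1]; rfl
    _ = iteratedDeriv (m + 1) (fun y => log y + log (Gamma y)) x := hshift.iteratedDeriv_eq _
    _ = psi m x + iteratedDeriv (m + 1) log x := by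
        rw [iteratedDeriv_fun_add (analyticAt_log hx).contDiffAt
          (analyticAt_log_Gamma hx).contDiffAt, add_comm]; rfl

lemma psi_zero_add_one {x : ℝ} (hx : 0 < x) : psi 0 (x + 1) = psi 0 x + x⁻¹ := by
  rw [psi_add_one 0 hx, zero_add, iteratedDeriv_one, deriv_log]

lemma psi_one_add_one {x : ℝ} (hx : 0 < x) : psi 1 (x + 1) = psi 1 x - (x ^ 2)⁻¹ := by
  rw [psi_add_one 1 hx, iteratedDeriv_succ, iteratedDeriv_one, deriv_log', deriv_inv,
    ← sub_eq_add_neg]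

lemma sum_range_factorial_div_mul_psi_sq_add_psi_one (a b : ℕ) :
    ∑ j ∈ range (b + 1), ((a + j)! : ℝ) / j ! * (psi 0 (a + j + 1) ^ 2 + psi 1 (a + j + 1)) =
      ((a + b + 1)! : ℝ) / (b ! * ((a : ℝ) + 1) ^ 3) *
        (((a : ℝ) + 1) ^ 2 * psi 1 (a + b + 2) - 2 * ((a : ℝ) + 1) * psi 0 (a + b + 2) +
          ((a : ℝ) + 1) ^ 2 * psi 0 (a + b + 2) ^ 2 + 2) := by
  have ha : (a : ℝ) + 1 ≠ 0 := by positivity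
  induction b with
  | zero =>
    have hψ0 := psi_zero_add_one (x := a + 1) (by positivity)
    have hψ1 := psi_one_add_one (x := a + 1) (by positivity)
    rw [show (a : ℝ) + 1 + 1 = a + 0 + 2 by ring] at hψ0 hψ1
    simp only [zero_add, sum_range_one, Nat.cast_zero, add_zero, Nat.factorial_zero,
      div_one, one_mul, Nat.factorial_succ, Nat.cast_mul, Nat.cast_succ] at hψ0 hψ1 ⊢
    rw [hψ0, hψ1]
    field_simp
    ring
  | succ b ih =>
    have hx : (0 : ℝ) < a + b + 2 := by positivity
    have hψ0 := psi_zero_add_one hx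
    have hψ1 := psi_one_add_one hx
    rw [sum_range_succ, ih, show a + (b + 1) = a + b + 1 by ring, Nat.factorial_succ (a + b + 1),
      Nat.factorial_succ b]
    push_cast
    rw [show (a : ℝ) + (b + 1) + 2 = a + b + 2 + 1 by ring,
      show (a : ℝ) + (b + 1) + 1 = a + b + 2 by ring, hψ0, hψ1]
    field_simp
    ring

theorem stmt_19 (m n : ℕ) (hm : 0 < m) (hmn : m ≤ n) :
    ∑ k ∈ Icc 1 m, ((Nat.factorial (n - k) : ℝ) / (Nat.factorial (m - k) : ℝ)) * ((psi 0 ((n : ℝ) - k + 1))^2 + psi 1 ((n : ℝ) - k + 1)) =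
      (Nat.factorial n : ℝ) / ((Nat.factorial (m - 1) : ℝ) * ((n : ℝ) - m + 1)^3) *
        (((n : ℝ) - m + 1)^2 * psi 1 ((n : ℝ) + 1) - 2 * ((n : ℝ) - m + 1) * psi 0 ((n : ℝ) + 1) +
          ((n : ℝ) - m + 1)^2 * (psi 0 ((n : ℝ) + 1))^2 + 2) := by
  have hreflect : ∑ k ∈ Icc 1 m, ((Nat.factorial (n - k) : ℝ) / (Nat.factorial (m - k) : ℝ)) *
        ((psi 0 ((n : ℝ) - k + 1))^2 + psi 1 ((n : ℝ) - k + 1)) =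
      ∑ j ∈ range (m - 1 + 1), ((n - m + j)! : ℝ) / j ! *
        (psi 0 ((n - m : ℕ) + j + 1) ^ 2 + psi 1 ((n - m : ℕ) + j + 1)) := by
    rw [Nat.sub_add_cancel hm]
    refine sum_nbij' (fun k => m - k) (fun j => m - j) ?_ ?_ ?_ ?_ ?_ <;>
      simp only [mem_Icc, mem_range] <;> try (intros; omega)
    intro k hk
    rw [show n - m + (m - k) = n - k by omega, Nat.cast_sub hmn, Nat.cast_sub hk.2]
    ring_nf
  have hn : ((n - m : ℕ) : ℝ) + (m - 1 : ℕ) + 2 = n + 1 := by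
    rw [Nat.cast_sub hmn, Nat.cast_sub hm]; push_cast; ring
  rw [hreflect, sum_range_factorial_div_mul_psi_sq_add_psi_one, hn,
    show n - m + (m - 1) + 1 = n by omega, Nat.cast_sub hmn]
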